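/- Let S be a finite type, G ⊆ S, P : S → S → ℝ≥0∞ with ∑_{t ∈ S} P s t = 1 for every s, T the associated Bellman operator, I ⊆ S a finite nonempty set of initial states, and τ ∈ ℝ≥0∞. If v : S → ℝ≥0∞ satisfies T v ≤ v pointwise and ∑_{s ∈ I} v s ≤ |I| · τ, then for every natural number n, ∑_{s ∈ I} (T^[n] 0) s ≤ |I| · τ; equivalently, ⨆_n ∑_{s ∈ I} (T^[n] 0) s ≤ |I| · τ. -/
import Mathlib


open scoped ENNReal

noncomputable def bellmanOp {S : Type*} [Fintype S] (G : Set S) [DecidablePred (· ∈ G)]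
    (P : S → S → ℝ≥0∞) (w : S → ℝ≥0∞) : S → ℝ≥0∞ :=
  fun s => if s ∈ G then 0 else 1 + ∑ t, P s t * w t

lemma bellmanOp_mono {S : Type*} [Fintype S] (G : Set S) [DecidablePred (· ∈ G)]
    (P : S → S → ℝ≥0∞) {w w' : S → ℝ≥0∞} (h : w ≤ w') :
    bellmanOp G P w ≤ bellmanOp G P w' := by
  intro s
  unfold bellmanOp
  split
  · exact le_rfl
  · gcongr with t
    exact h t

theorem bellman_inequalities_threshold_soundness
    {S : Type*} [Fintype S] (G : Set S) [DecidablePred (· ∈ G)]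
    (P : S → S → ℝ≥0∞) (hP : ∀ s, ∑ t, P s t = 1)
    (I : Finset S) (hI : I.Nonempty) (τ : ℝ≥0∞)
    (v : S → ℝ≥0∞) (hv : bellmanOp G P v ≤ v)
    (hvτ : ∑ s ∈ I, v s ≤ (I.card : ℝ≥0∞) * τ) :
    (∀ n : ℕ, ∑ s ∈ I, ((bellmanOp G P)^[n] 0) s ≤ (I.card : ℝ≥0∞) * τ) ∧
      (⨆ n : ℕ, ∑ s ∈ I, ((bellmanOp G P)^[n] 0) s) ≤ (I.card : ℝ≥0∞) * τ := by
  have key : ∀ n : ℕ, (bellmanOp G P)^[n] 0 ≤ v := by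
    intro n
    induction n with
    | zero => intro s; simp
    | succ n ih =>
      rw [Function.iterate_succ_apply']
      exact le_trans (bellmanOp_mono G P ih) hv
  have h1 : ∀ n : ℕ, ∑ s ∈ I, ((bellmanOp G P)^[n] 0) s ≤ (I.card : ℝ≥0∞) * τ := by
    intro n
    exact le_trans (Finset.sum_le_sum fun s _ => key n s) hvτ
  exact ⟨h1, iSup_le h1⟩
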